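/- arXiv:2404.04972 — 6 statements merged into one kernel-verified Lean document; each statement's English description precedes it below -/
import Mathlib

section
/- Let $\Sigma$ be a fan in $N_\mathbb{R}$ and let $C' \prec C$ be a face of a cone $C \in \Sigma$. The map $O_{C'}(\mathbb{T}) = \mathrm{Hom}((C')^\perp \cap M, \mathbb{R}) \to X_C(\mathbb{T}) = \mathrm{Hom}_{\mathrm{monoid}}(C^\vee \cap M, \mathbb{T})$ sending $p$ to the map that equals $p$ on $(C')^\perp \cap M$ and $\infty$ elsewhere, is a well-defined injection; moreover $X_C(\mathbb{T})$ is the disjoint union $\bigsqcup_{C' \prec C} O_{C'}(\mathbb{T})$ over all faces $C'$ of $C$. -/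
/-!
A point `q` of `X_C(𝕋)` is finite exactly on `S = {m ∈ C^∨ ∩ M | q m ≠ ∞}`, a face of the monoid
`C^∨ ∩ M`. Summing elements of `S` that are positive on the generators of `C` not killed by `S`
gives `m₀ ∈ S` whose hyperplane cuts out a face `C''` with `S = C^∨ ∩ C''^⊥ ∩ M`; adding multiples
of `m₀` shows that `S - S = C''^⊥ ∩ M`, so `q` restricted to `S` extends to a point of
`O_{C''}(𝕋)`. The face is unique because a face `F` of a rational cone is recovered from
`C^∨ ∩ F^⊥ ∩ M`: its real supporting functional can be replaced by an integral one, obtained by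
rounding a real combination of integral solutions of the linear system cutting out `F`.
-/

open scoped Classical

/-- The pairing `⟨m, n⟩ = ∑ i, m i * n i` between `M = ℤ^d` and `N_ℝ = ℝ^d`. -/
def tpair {d : ℕ} (m : Fin d → ℤ) (nn : Fin d → ℝ) : ℝ := ∑ i, (m i : ℝ) * nn i

/-- `C^∨ ∩ M`: the integral points of the dual cone of `C ⊆ N_ℝ`. -/
def dualM {d : ℕ} (C : Set (Fin d → ℝ)) : Set (Fin d → ℤ) :=
  {m | ∀ nn ∈ C, 0 ≤ tpair m nn}

/-- `C'^⊥ ∩ M`: the integral points orthogonal to `C'`. -/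
def perpM {d : ℕ} (C' : Set (Fin d → ℝ)) : Set (Fin d → ℤ) :=
  {m | ∀ nn ∈ C', tpair m nn = 0}

/-- `p : M → 𝕋` is a monoid homomorphism on `S`. -/
def IsTropHomOn {d : ℕ} (S : Set (Fin d → ℤ)) (p : (Fin d → ℤ) → WithTop ℝ) : Prop :=
  p 0 = 0 ∧ ∀ a ∈ S, ∀ b ∈ S, p (a + b) = p a + p b

/-- An element of the tropical torus orbit `O_{C'}(𝕋) = Hom(C'^⊥ ∩ M, ℝ)`,
recorded as a real-valued function which is additive on `C'^⊥ ∩ M`. -/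
def IsOrbitElt {d : ℕ} (C' : Set (Fin d → ℝ)) (pr : (Fin d → ℤ) → ℝ) : Prop :=
  pr 0 = 0 ∧ ∀ a ∈ perpM C', ∀ b ∈ perpM C', pr (a + b) = pr a + pr b

/-- The extension of `p ∈ O_{C'}(𝕋)` to `X_C(𝕋)`: equal to `p` on `C'^⊥ ∩ M`
and `∞` elsewhere. -/
noncomputable def orbitEmb {d : ℕ} (C' : Set (Fin d → ℝ)) (pr : (Fin d → ℤ) → ℝ) :
    (Fin d → ℤ) → WithTop ℝ :=
  fun m => if m ∈ perpM C' then ((pr m : ℝ) : WithTop ℝ) else ⊤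

/-- The conic hull of a finite set of integral vectors (a rational polyhedral cone). -/
def coneHullF {d : ℕ} (s : Finset (Fin d → ℤ)) : Set (Fin d → ℝ) :=
  {x | ∃ c : (Fin d → ℤ) → ℝ, (∀ v, 0 ≤ c v) ∧
    x = ∑ v ∈ s, c v • (fun i => (v i : ℝ))}

/-- `C'` is a face of the cone `C`: it is cut out of `C` by a supporting hyperplane. -/
def IsFace {d : ℕ} (C C' : Set (Fin d → ℝ)) : Prop :=
  ∃ m₀ : Fin d → ℝ, (∀ nn ∈ C, 0 ≤ ∑ i, m₀ i * nn i) ∧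
    C' = {nn ∈ C | ∑ i, m₀ i * nn i = 0}

open Matrix

section Pairing

variable {d : ℕ}

lemma tpair_eq_dotProduct (m : Fin d → ℤ) (x : Fin d → ℝ) :
    tpair m x = (Int.cast ∘ m) ⬝ᵥ x := rfl

lemma intCast_dotProduct (m v : Fin d → ℤ) :
    ((m ⬝ᵥ v : ℤ) : ℝ) = (Int.cast ∘ m) ⬝ᵥ (Int.cast ∘ v : Fin d → ℝ) :=
  (Int.castRingHom ℝ).map_dotProduct m v

lemma tpair_intCast (m v : Fin d → ℤ) : tpair m (Int.cast ∘ v) = ((m ⬝ᵥ v : ℤ) : ℝ) :=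
  (intCast_dotProduct m v).symm

lemma tpair_add (a b : Fin d → ℤ) (x : Fin d → ℝ) : tpair (a + b) x = tpair a x + tpair b x := by
  simp only [tpair, Pi.add_apply, Int.cast_add, add_mul, Finset.sum_add_distrib]

lemma tpair_neg (a : Fin d → ℤ) (x : Fin d → ℝ) : tpair (-a) x = -tpair a x := by
  simp only [tpair, Pi.neg_apply, Int.cast_neg, neg_mul, Finset.sum_neg_distrib]

def dualAddSubmonoid (C : Set (Fin d → ℝ)) : AddSubmonoid (Fin d → ℤ) where
  carrier := dualM C
  zero_mem' x _ := by simp [tpair]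
  add_mem' ha hb x hx := by rw [tpair_add]; exact add_nonneg (ha x hx) (hb x hx)

def perpAddSubgroup (C : Set (Fin d → ℝ)) : AddSubgroup (Fin d → ℤ) where
  carrier := perpM C
  zero_mem' x _ := by simp [tpair]
  add_mem' ha hb x hx := by rw [tpair_add, ha x hx, hb x hx, add_zero]
  neg_mem' ha x hx := by rw [tpair_neg, ha x hx, neg_zero]

lemma mem_perpM_of_add_mem_perpM {C C' : Set (Fin d → ℝ)} (hC' : C' ⊆ C) {a b : Fin d → ℤ}
    (ha : a ∈ dualM C) (hb : b ∈ dualM C) (hab : a + b ∈ perpM C') : a ∈ perpM C' := by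
  intro x hx
  have := hab x hx
  rw [tpair_add] at this
  linarith [ha x (hC' hx), hb x (hC' hx)]

end Pairing

lemma IsFace.subset {d : ℕ} {C C' : Set (Fin d → ℝ)} (h : IsFace C C') : C' ⊆ C := by
  obtain ⟨_, _, rfl⟩ := h
  exact Set.sep_subset _ _

section Orbit

variable {d : ℕ} {C' : Set (Fin d → ℝ)} {pr : (Fin d → ℤ) → ℝ}

lemma orbitEmb_of_mem {m : Fin d → ℤ} (hm : m ∈ perpM C') : orbitEmb C' pr m = pr m :=
  if_pos hm

lemma orbitEmb_of_notMem {m : Fin d → ℤ} (hm : m ∉ perpM C') : orbitEmb C' pr m = ⊤ :=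
  if_neg hm

lemma orbitEmb_ne_top_iff {m : Fin d → ℤ} : orbitEmb C' pr m ≠ ⊤ ↔ m ∈ perpM C' := by
  by_cases hm : m ∈ perpM C' <;> simp [orbitEmb, hm]

theorem isTropHomOn_orbitEmb {C : Set (Fin d → ℝ)} (hC' : C' ⊆ C) (hpr : IsOrbitElt C' pr) :
    IsTropHomOn (dualM C) (orbitEmb C' pr) := by
  refine ⟨by rw [orbitEmb_of_mem (perpAddSubgroup C').zero_mem, hpr.1]; rfl, fun a ha b hb => ?_⟩
  by_cases hab : a ∈ perpM C' ∧ b ∈ perpM C'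
  · rw [orbitEmb_of_mem hab.1, orbitEmb_of_mem hab.2,
      orbitEmb_of_mem ((perpAddSubgroup C').add_mem hab.1 hab.2), hpr.2 a hab.1 b hab.2,
      WithTop.coe_add]
  · have hsum : a + b ∉ perpM C' := fun h => hab
      ⟨mem_perpM_of_add_mem_perpM hC' ha hb h,
        mem_perpM_of_add_mem_perpM hC' hb ha (add_comm a b ▸ h)⟩
    rw [orbitEmb_of_notMem hsum]
    rcases not_and_or.mp hab with h | h
    · rw [orbitEmb_of_notMem h, top_add]
    · rw [orbitEmb_of_notMem h, add_top]

theorem eqOn_of_orbitEmb_eq {pr' : (Fin d → ℤ) → ℝ} (h : orbitEmb C' pr = orbitEmb C' pr') :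
    ∀ m ∈ perpM C', pr m = pr' m := fun m hm => by
  simpa [orbitEmb_of_mem hm] using congrFun h m

end Orbit

section ConeHull

variable {d : ℕ} {s : Finset (Fin d → ℤ)}

lemma intCast_mem_coneHullF {v : Fin d → ℤ} (hv : v ∈ s) : Int.cast ∘ v ∈ coneHullF s := by
  refine ⟨Pi.single v 1, fun w => ?_, ?_⟩
  · by_cases h : w = v <;> simp [h]
  · rw [Finset.sum_eq_single_of_mem v hv fun w _ hw => by simp [hw]]
    simp [Function.comp_def]

lemma coneHullF_mono {t : Finset (Fin d → ℤ)} (h : t ⊆ s) : coneHullF t ⊆ coneHullF s := by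
  rintro x ⟨c, hc, rfl⟩
  refine ⟨fun v => if v ∈ t then c v else 0, fun v => ?_, ?_⟩
  · dsimp only; split_ifs <;> simp [hc v]
  · rw [← Finset.sum_subset h fun v _ hv => by simp [hv]]
    exact Finset.sum_congr rfl fun v hv => by simp [hv]

lemma dotProduct_sum_smul_intCast (y : Fin d → ℝ) (c : (Fin d → ℤ) → ℝ) :
    y ⬝ᵥ ∑ v ∈ s, c v • (fun i => (v i : ℝ)) = ∑ v ∈ s, c v * (y ⬝ᵥ (Int.cast ∘ v)) := by
  simp only [dotProduct_sum, dotProduct_smul, smul_eq_mul, Function.comp_def]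

lemma mem_dualM_coneHullF {m : Fin d → ℤ} :
    m ∈ dualM (coneHullF s) ↔ ∀ v ∈ s, 0 ≤ m ⬝ᵥ v := by
  refine ⟨fun h v hv => ?_, ?_⟩
  · exact_mod_cast tpair_intCast m v ▸ h _ (intCast_mem_coneHullF hv)
  · rintro h x ⟨c, hc, rfl⟩
    rw [tpair_eq_dotProduct, dotProduct_sum_smul_intCast]
    exact Finset.sum_nonneg fun v hv =>
      mul_nonneg (hc v) (by rw [← intCast_dotProduct]; exact_mod_cast h v hv)

lemma mem_perpM_coneHullF {m : Fin d → ℤ} :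
    m ∈ perpM (coneHullF s) ↔ ∀ v ∈ s, m ⬝ᵥ v = 0 := by
  refine ⟨fun h v hv => ?_, ?_⟩
  · exact_mod_cast tpair_intCast m v ▸ h _ (intCast_mem_coneHullF hv)
  · rintro h x ⟨c, hc, rfl⟩
    rw [tpair_eq_dotProduct, dotProduct_sum_smul_intCast]
    exact Finset.sum_eq_zero fun v hv => by rw [← intCast_dotProduct, h v hv]; simp

lemma sep_coneHullF_dotProduct_eq_zero {y : Fin d → ℝ} (hy : ∀ x ∈ coneHullF s, 0 ≤ y ⬝ᵥ x) :
    {x ∈ coneHullF s | y ⬝ᵥ x = 0} =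
      coneHullF (s.filter fun v => y ⬝ᵥ (Int.cast ∘ v) = 0) := by
  have hgen : ∀ v ∈ s, 0 ≤ y ⬝ᵥ (Int.cast ∘ v) := fun v hv => hy _ (intCast_mem_coneHullF hv)
  ext x
  constructor
  · rintro ⟨⟨c, hc, rfl⟩, hx⟩
    rw [dotProduct_sum_smul_intCast,
      Finset.sum_eq_zero_iff_of_nonneg fun v hv => mul_nonneg (hc v) (hgen v hv)] at hx
    refine ⟨c, hc, (Finset.sum_subset (Finset.filter_subset _ s) fun v hv hv' => ?_).symm⟩
    have hcv : c v = 0 := (mul_eq_zero.mp (hx v hv)).resolve_right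
      fun h => hv' (Finset.mem_filter.mpr ⟨hv, h⟩)
    simp [hcv]
  · rintro ⟨c, hc, rfl⟩
    refine ⟨coneHullF_mono (Finset.filter_subset _ s) ⟨c, hc, rfl⟩, ?_⟩
    rw [dotProduct_sum_smul_intCast]
    exact Finset.sum_eq_zero fun v hv => by rw [(Finset.mem_filter.mp hv).2, mul_zero]

end ConeHull

section IntegralPoints

variable {d : ℕ}

theorem mem_span_intCast_of_dotProduct_eq_zero (t : Finset (Fin d → ℤ)) {y : Fin d → ℝ}
    (hy : ∀ w ∈ t, y ⬝ᵥ (Int.cast ∘ w) = 0) :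
    y ∈ Submodule.span ℝ ((Int.cast ∘ ·) '' {m : Fin d → ℤ | ∀ w ∈ t, m ⬝ᵥ w = 0}) := by
  induction t using Finset.induction_on generalizing y with
  | empty =>
    rw [pi_eq_sum_univ y]
    refine Submodule.sum_mem _ fun i _ => Submodule.smul_mem _ _ (Submodule.subset_span ?_)
    exact ⟨fun j => if i = j then 1 else 0, by simp, by ext j; simp [apply_ite]⟩
  | insert w t _ ih =>
    have hyt := ih fun w' hw' => hy w' (Finset.mem_insert_of_mem hw')
    by_cases hall : ∀ m : Fin d → ℤ, (∀ w' ∈ t, m ⬝ᵥ w' = 0) → m ⬝ᵥ w = 0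
    · refine Submodule.span_mono (Set.image_mono fun m hm w' hw' => ?_) hyt
      rcases Finset.mem_insert.mp hw' with rfl | hw'
      exacts [hall m hm, hm w' hw']
    push Not at hall
    obtain ⟨m₀, hm₀, hc₀⟩ := hall
    set c₀ := m₀ ⬝ᵥ w
    have hc₀' : (c₀ : ℝ) ≠ 0 := Int.cast_ne_zero.mpr hc₀
    -- the projection onto `w^⊥` along `m₀` maps integral solutions for `t` to rescaled
    -- integral solutions for `insert w t`, and fixes `y`
    let φ : (Fin d → ℝ) →ₗ[ℝ] (Fin d → ℝ) :=
      { toFun := fun x => x - ((x ⬝ᵥ (Int.cast ∘ w)) / c₀) • (Int.cast ∘ m₀)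
        map_add' := fun x x' => by simp only [add_dotProduct, add_div, add_smul]; abel
        map_smul' := fun a x => by
          simp only [smul_dotProduct, smul_eq_mul, mul_div_assoc, smul_sub, smul_smul]; rfl }
    have hφ : (Submodule.span ℝ ((Int.cast ∘ ·) '' {m : Fin d → ℤ | ∀ w' ∈ t, m ⬝ᵥ w' = 0})).map φ ≤
        Submodule.span ℝ
          ((Int.cast ∘ ·) '' {m : Fin d → ℤ | ∀ w' ∈ insert w t, m ⬝ᵥ w' = 0}) := by
      rw [Submodule.map_span, Submodule.span_le]
      rintro _ ⟨_, ⟨m, hm, rfl⟩, rfl⟩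
      have hmem : c₀ • m - (m ⬝ᵥ w) • m₀ ∈ {m : Fin d → ℤ | ∀ w' ∈ insert w t, m ⬝ᵥ w' = 0} := by
        intro w' hw'
        rw [sub_dotProduct, smul_dotProduct, smul_dotProduct, smul_eq_mul, smul_eq_mul]
        rcases Finset.mem_insert.mp hw' with rfl | hw'
        · ring
        · rw [hm w' hw', hm₀ w' hw', mul_zero, mul_zero, sub_zero]
      have hφm : φ (Int.cast ∘ m) = (c₀ : ℝ)⁻¹ • (Int.cast ∘ (c₀ • m - (m ⬝ᵥ w) • m₀)) := by
        have hcast : (Int.cast ∘ (c₀ • m - (m ⬝ᵥ w) • m₀) : Fin d → ℝ) =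
            (c₀ : ℝ) • (Int.cast ∘ m) - ((m ⬝ᵥ w : ℤ) : ℝ) • (Int.cast ∘ m₀) := by
          ext i; simp
        rw [hcast, smul_sub, smul_smul, smul_smul, inv_mul_cancel₀ hc₀', one_smul,
          intCast_dotProduct m w, inv_mul_eq_div]
        rfl
      rw [SetLike.mem_coe, hφm]
      exact Submodule.smul_mem _ _ (Submodule.subset_span ⟨_, hmem, rfl⟩)
    have hφy : φ y = y := by
      change y - _ = y
      rw [hy w (Finset.mem_insert_self w t), zero_div, zero_smul, sub_zero]
    exact hφy ▸ hφ (Submodule.mem_map_of_mem hyt)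

lemma mul_sub_abs_le_floor_mul (a b : ℝ) : a * b - |b| ≤ ⌊a⌋ * b := by
  rcases le_total 0 b with hb | hb
  · rw [abs_of_nonneg hb]; nlinarith [Int.sub_one_lt_floor a]
  · rw [abs_of_nonpos hb]; nlinarith [Int.floor_le a]

theorem exists_int_dotProduct_eq_zero_and_pos (t F : Finset (Fin d → ℤ)) {y : Fin d → ℝ}
    (h0 : ∀ w ∈ t, y ⬝ᵥ (Int.cast ∘ w) = 0) (hF : ∀ w ∈ F, 0 < y ⬝ᵥ (Int.cast ∘ w)) :
    ∃ m : Fin d → ℤ, (∀ w ∈ t, m ⬝ᵥ w = 0) ∧ ∀ w ∈ F, 0 < m ⬝ᵥ w := by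
  obtain ⟨n, c, g, hy⟩ := Submodule.mem_span_set'.mp (mem_span_intCast_of_dotProduct_eq_zero t h0)
  choose m hmt hm using fun j => (g j).2
  have hyw : ∀ w, y ⬝ᵥ (Int.cast ∘ w) = ∑ j, c j * ((m j ⬝ᵥ w : ℤ) : ℝ) := fun w => by
    simp only [← hy, sum_dotProduct, smul_dotProduct, smul_eq_mul, ← hm, intCast_dotProduct]
  -- scale `c` up until rounding it down loses less than the margin of every inequality
  obtain ⟨D, hD⟩ : ∃ D : ℕ, ∀ w ∈ F, ∑ j, |((m j ⬝ᵥ w : ℤ) : ℝ)| < D * (y ⬝ᵥ (Int.cast ∘ w)) :=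
    ((Filter.eventually_all_finset F).2 fun w hw =>
      (tendsto_natCast_atTop_atTop.atTop_mul_const (hF w hw)).eventually_gt_atTop _).exists
  refine ⟨∑ j, ⌊D * c j⌋ • m j, fun w hw => ?_, fun w hw => ?_⟩
  · simp only [sum_dotProduct, smul_dotProduct, hmt _ w hw, smul_zero, Finset.sum_const_zero]
  · simp only [sum_dotProduct, smul_dotProduct, smul_eq_mul]
    have : (0 : ℝ) < ∑ j, (⌊D * c j⌋ : ℝ) * ((m j ⬝ᵥ w : ℤ) : ℝ) := calc
      0 < D * (y ⬝ᵥ (Int.cast ∘ w)) - ∑ j, |((m j ⬝ᵥ w : ℤ) : ℝ)| := by linarith [hD w hw]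
      _ = ∑ j, (D * c j * ((m j ⬝ᵥ w : ℤ) : ℝ) - |((m j ⬝ᵥ w : ℤ) : ℝ)|) := by
        rw [hyw, Finset.mul_sum, ← Finset.sum_sub_distrib]
        simp only [mul_assoc]
      _ ≤ _ := Finset.sum_le_sum fun j _ => mul_sub_abs_le_floor_mul _ _
    exact_mod_cast this

end IntegralPoints

section Faces

variable {d : ℕ} {s : Finset (Fin d → ℤ)}

theorem IsFace.eq_coneHullF_filter {F : Set (Fin d → ℝ)} (hF : IsFace (coneHullF s) F) :
    F = coneHullF (s.filter fun v => ∀ m ∈ dualM (coneHullF s) ∩ perpM F, m ⬝ᵥ v = 0) := by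
  obtain ⟨y, hy, hFy⟩ := hF
  set t := s.filter fun v => y ⬝ᵥ (Int.cast ∘ v) = 0
  have hFt : F = coneHullF t := hFy.trans (sep_coneHullF_dotProduct_eq_zero hy)
  subst hFt
  congr 1
  refine Finset.filter_congr fun v hv => ⟨fun hvt m hm => mem_perpM_coneHullF.mp hm.2 v ?_, ?_⟩
  · exact Finset.mem_filter.mpr ⟨hv, hvt⟩
  · intro hperp
    by_contra hyv
    have hpos : ∀ w ∈ s \ t, 0 < y ⬝ᵥ (Int.cast ∘ w) := fun w hw =>
      have ⟨hws, hwt⟩ := Finset.mem_sdiff.mp hw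
      (hy _ (intCast_mem_coneHullF hws)).lt_of_ne' fun h => hwt (Finset.mem_filter.mpr ⟨hws, h⟩)
    obtain ⟨m, hmt, hm⟩ := exists_int_dotProduct_eq_zero_and_pos t (s \ t)
      (fun w hw => (Finset.mem_filter.mp hw).2) hpos
    have hmdual : m ∈ dualM (coneHullF s) := mem_dualM_coneHullF.mpr fun w hw => by
      by_cases hwt : w ∈ t
      exacts [(hmt w hwt).ge, (hm w (Finset.mem_sdiff.mpr ⟨hw, hwt⟩)).le]
    exact (hm v (Finset.mem_sdiff.mpr ⟨hv, fun h => hyv (Finset.mem_filter.mp h).2⟩)).ne'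
      (hperp m ⟨hmdual, mem_perpM_coneHullF.mpr hmt⟩)

theorem IsFace.eq_of_dualM_inter_perpM_eq {F₁ F₂ : Set (Fin d → ℝ)}
    (h₁ : IsFace (coneHullF s) F₁) (h₂ : IsFace (coneHullF s) F₂)
    (h : dualM (coneHullF s) ∩ perpM F₁ = dualM (coneHullF s) ∩ perpM F₂) : F₁ = F₂ := by
  rw [h₁.eq_coneHullF_filter, h₂.eq_coneHullF_filter, h]

lemma exists_mem_dotProduct_pos (S : AddSubmonoid (Fin d → ℤ))
    (hS : ∀ m ∈ S, ∀ v ∈ s, 0 ≤ m ⬝ᵥ v) :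
    ∃ m₀ ∈ S, ∀ v ∈ s, (∃ m ∈ S, m ⬝ᵥ v ≠ 0) → 0 < m₀ ⬝ᵥ v := by
  have hwit : ∀ v ∈ s, ∃ m ∈ S, (∃ m ∈ S, m ⬝ᵥ v ≠ 0) → 0 < m ⬝ᵥ v := fun v hv => by
    by_cases hex : ∃ m ∈ S, m ⬝ᵥ v ≠ 0
    · obtain ⟨m, hm, hmv⟩ := hex
      exact ⟨m, hm, fun _ => (hS m hm v hv).lt_of_ne' hmv⟩
    · exact ⟨0, S.zero_mem, fun h => absurd h hex⟩
  choose! g hgS hgpos using hwit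
  refine ⟨∑ v ∈ s, g v, S.sum_mem hgS, fun v hv hex => ?_⟩
  rw [sum_dotProduct]
  exact (hgpos v hv hex).trans_le
    (Finset.single_le_sum (fun u hu => hS _ (hgS u hu) v hv) hv)

lemma exists_add_nsmul_mem_dualM (m m₀ : Fin d → ℤ) (hm₀ : ∀ v ∈ s, 0 ≤ m₀ ⬝ᵥ v)
    (h : ∀ v ∈ s, m ⬝ᵥ v < 0 → 0 < m₀ ⬝ᵥ v) :
    ∃ N : ℕ, m + N • m₀ ∈ dualM (coneHullF s) := by
  refine ⟨∑ v ∈ s, (-(m ⬝ᵥ v)).toNat, mem_dualM_coneHullF.mpr fun v hv => ?_⟩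
  have hN : -(m ⬝ᵥ v) ≤ ((∑ v ∈ s, (-(m ⬝ᵥ v)).toNat : ℕ) : ℤ) := by
    refine (Int.self_le_toNat _).trans ?_
    exact_mod_cast Finset.single_le_sum (f := fun v => (-(m ⬝ᵥ v)).toNat)
      (fun _ _ => Nat.zero_le _) hv
  rw [add_dotProduct, smul_dotProduct, nsmul_eq_mul]
  rcases lt_or_ge (m ⬝ᵥ v) 0 with hneg | hnonneg
  · nlinarith [h v hv hneg]
  · nlinarith [hm₀ v hv]

theorem exists_isFace_eq_dualM_inter_perpM (S : AddSubmonoid (Fin d → ℤ))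
    (hSdual : ∀ m ∈ S, m ∈ dualM (coneHullF s))
    (hSface : ∀ a ∈ dualM (coneHullF s), ∀ b ∈ dualM (coneHullF s), a + b ∈ S → a ∈ S) :
    ∃ F, IsFace (coneHullF s) F ∧ (∀ m, m ∈ S ↔ m ∈ dualM (coneHullF s) ∧ m ∈ perpM F) ∧
      ∀ m ∈ perpM F, ∃ a ∈ S, ∃ b ∈ S, m = a - b := by
  have hSnonneg : ∀ m ∈ S, ∀ v ∈ s, 0 ≤ m ⬝ᵥ v := fun m hm =>
    mem_dualM_coneHullF.mp (hSdual m hm)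
  obtain ⟨m₀, hm₀S, hm₀⟩ := exists_mem_dotProduct_pos S hSnonneg
  set t := s.filter fun v => ∀ m ∈ S, m ⬝ᵥ v = 0
  have hm₀pos : ∀ v ∈ s, v ∉ t → 0 < m₀ ⬝ᵥ v := fun v hv hvt => hm₀ v hv <| by
    simpa [t, hv] using hvt
  have hSperp : ∀ m ∈ S, m ∈ perpM (coneHullF t) := fun m hm =>
    mem_perpM_coneHullF.mpr fun v hv => (Finset.mem_filter.mp hv).2 m hm
  have hshift : ∀ m ∈ perpM (coneHullF t), ∃ N : ℕ, m + N • m₀ ∈ dualM (coneHullF s) :=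
    fun m hm => exists_add_nsmul_mem_dualM m m₀ (hSnonneg m₀ hm₀S) fun v hv hmv =>
      hm₀pos v hv fun hvt => hmv.ne (mem_perpM_coneHullF.mp hm v hvt)
  have hmemS : ∀ m, m ∈ S ↔ m ∈ dualM (coneHullF s) ∧ m ∈ perpM (coneHullF t) := fun m => by
    refine ⟨fun hm => ⟨hSdual m hm, hSperp m hm⟩, fun ⟨hmdual, hmperp⟩ => ?_⟩
    obtain ⟨N, hN⟩ := hshift (-m) ((perpAddSubgroup _).neg_mem hmperp)
    exact hSface m hmdual _ hN (by simpa using S.nsmul_mem hm₀S N)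
  refine ⟨coneHullF t, ⟨Int.cast ∘ m₀, fun x hx => hSdual m₀ hm₀S x hx, ?_⟩, hmemS, ?_⟩
  · change coneHullF t = {x ∈ coneHullF s | (Int.cast ∘ m₀) ⬝ᵥ x = 0}
    rw [sep_coneHullF_dotProduct_eq_zero (y := Int.cast ∘ m₀) fun x hx => hSdual m₀ hm₀S x hx]
    congr 1
    refine Finset.filter_congr fun v hv => ?_
    rw [← intCast_dotProduct, Int.cast_eq_zero]
    refine ⟨fun h => h m₀ hm₀S, fun h => ?_⟩
    by_contra hvt
    exact (hm₀pos v hv fun hvt' => hvt (Finset.mem_filter.mp hvt').2).ne' h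
  · intro m hm
    obtain ⟨N, hN⟩ := hshift m hm
    refine ⟨m + N • m₀, (hmemS _).mpr ⟨hN, ?_⟩, N • m₀, S.nsmul_mem hm₀S N, by abel⟩
    exact (perpAddSubgroup _).add_mem hm ((perpAddSubgroup _).nsmul_mem (hSperp m₀ hm₀S) N)

end Faces

lemma AddSubmonoid.exists_apply_sub_eq_sub {G : Type*} [AddCommGroup G] (S : AddSubmonoid G)
    (r : G → ℝ) (hr : ∀ a ∈ S, ∀ b ∈ S, r (a + b) = r a + r b) :
    ∃ p : G → ℝ, ∀ a ∈ S, ∀ b ∈ S, p (a - b) = r a - r b := by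
  refine ⟨fun x => if h : ∃ ab : G × G, ab.1 ∈ S ∧ ab.2 ∈ S ∧ x = ab.1 - ab.2
    then r h.choose.1 - r h.choose.2 else 0, fun a ha b hb => ?_⟩
  have h : ∃ ab : G × G, ab.1 ∈ S ∧ ab.2 ∈ S ∧ a - b = ab.1 - ab.2 := ⟨(a, b), ha, hb, rfl⟩
  obtain ⟨ha', hb', heq⟩ := h.choose_spec
  have hsum := hr _ ha' _ hb
  rw [← sub_eq_sub_iff_add_eq_add.mp heq, hr _ ha _ hb'] at hsum
  simp only [dif_pos h]
  linarith

section Tropical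

variable {d : ℕ} {C : Set (Fin d → ℝ)} {q : (Fin d → ℤ) → WithTop ℝ}

def finiteLocus (hq : IsTropHomOn (dualM C) q) : AddSubmonoid (Fin d → ℤ) where
  carrier := {m | m ∈ dualM C ∧ q m ≠ ⊤}
  zero_mem' := ⟨(dualAddSubmonoid C).zero_mem, by rw [hq.1]; exact WithTop.zero_ne_top⟩
  add_mem' := fun {a b} ⟨ha, ha'⟩ ⟨hb, hb'⟩ =>
    ⟨(dualAddSubmonoid C).add_mem ha hb,
      by rw [hq.2 a ha b hb]; exact WithTop.add_ne_top.mpr ⟨ha', hb'⟩⟩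

lemma mem_finiteLocus_of_add_mem (hq : IsTropHomOn (dualM C) q) {a b : Fin d → ℤ}
    (ha : a ∈ dualM C) (hb : b ∈ dualM C) (hab : a + b ∈ finiteLocus hq) : a ∈ finiteLocus hq :=
  ⟨ha, fun h => hab.2 (by rw [hq.2 a ha b hb, h, top_add])⟩

lemma dualM_inter_perpM_eq_finiteLocus (hq : IsTropHomOn (dualM C) q) {F : Set (Fin d → ℝ)}
    {pr : (Fin d → ℤ) → ℝ} (h : ∀ m ∈ dualM C, q m = orbitEmb F pr m) :
    dualM C ∩ perpM F = finiteLocus hq := by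
  ext m
  refine ⟨fun ⟨hm, hmF⟩ => ⟨hm, ?_⟩, fun ⟨hm, hne⟩ => ⟨hm, ?_⟩⟩
  · rw [h m hm]; exact orbitEmb_ne_top_iff.mpr hmF
  · exact orbitEmb_ne_top_iff.mp (h m hm ▸ hne)

end Tropical

theorem exists_unique_isFace_orbitEmb {d : ℕ} (s : Finset (Fin d → ℤ))
    {q : (Fin d → ℤ) → WithTop ℝ} (hq : IsTropHomOn (dualM (coneHullF s)) q) :
    ∃ C'' pr, IsFace (coneHullF s) C'' ∧ IsOrbitElt C'' pr ∧
      (∀ m ∈ dualM (coneHullF s), q m = orbitEmb C'' pr m) ∧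
      ∀ C₂ pr₂, IsFace (coneHullF s) C₂ → IsOrbitElt C₂ pr₂ →
        (∀ m ∈ dualM (coneHullF s), q m = orbitEmb C₂ pr₂ m) → C₂ = C'' := by
  set S := finiteLocus hq
  obtain ⟨F, hF, hSF, hdiff⟩ := exists_isFace_eq_dualM_inter_perpM S (fun m hm => hm.1)
    fun a ha b hb => mem_finiteLocus_of_add_mem hq ha hb
  choose! r hr using fun m (hm : m ∈ S) => (WithTop.ne_top_iff_exists.mp hm.2).imp fun _ => Eq.symm
  have hr0 : r 0 = 0 := by exact_mod_cast (hq.1 ▸ hr 0 S.zero_mem).symm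
  have hr_add : ∀ a ∈ S, ∀ b ∈ S, r (a + b) = r a + r b := fun a ha b hb => by
    have h := hq.2 a ha.1 b hb.1
    rw [hr _ (S.add_mem ha hb), hr a ha, hr b hb] at h
    exact_mod_cast h
  obtain ⟨p, hp⟩ := S.exists_apply_sub_eq_sub r hr_add
  have hpS : ∀ m ∈ S, p m = r m := fun m hm => by simpa [hr0] using hp m hm 0 S.zero_mem
  refine ⟨F, p, hF, ⟨by simpa [hr0] using hpS 0 S.zero_mem, fun x hx y hy => ?_⟩, fun m hm => ?_,
    fun C₂ pr₂ hC₂ _ h₂ => hC₂.eq_of_dualM_inter_perpM_eq hF ?_⟩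
  · obtain ⟨a, ha, b, hb, rfl⟩ := hdiff x hx
    obtain ⟨a', ha', b', hb', rfl⟩ := hdiff y hy
    rw [show a - b + (a' - b') = (a + a') - (b + b') by abel, hp _ (S.add_mem ha ha') _
      (S.add_mem hb hb'), hp a ha b hb, hp a' ha' b' hb', hr_add a ha a' ha', hr_add b hb b' hb']
    ring
  · by_cases hmF : m ∈ perpM F
    · have hmS : m ∈ S := (hSF m).mpr ⟨hm, hmF⟩
      rw [orbitEmb_of_mem hmF, hpS m hmS, hr m hmS]
    · rw [orbitEmb_of_notMem hmF]
      by_contra hne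
      exact hmF ((hSF m).mp ⟨hm, hne⟩).2
  · rw [dualM_inter_perpM_eq_finiteLocus hq h₂]
    ext m
    exact hSF m

theorem stmt5_general {d : ℕ} (s : Finset (Fin d → ℤ)) (C : Set (Fin d → ℝ))
    (hC : C = coneHullF s) (C' : Set (Fin d → ℝ)) (hface : IsFace C C') :
    (∀ pr, IsOrbitElt C' pr → IsTropHomOn (dualM C) (orbitEmb C' pr)) ∧
    (∀ pr pr', IsOrbitElt C' pr → IsOrbitElt C' pr' →
      orbitEmb C' pr = orbitEmb C' pr' → ∀ m ∈ perpM C', pr m = pr' m) ∧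
    (∀ q : (Fin d → ℤ) → WithTop ℝ, IsTropHomOn (dualM C) q →
      ∃ C'' pr, IsFace C C'' ∧ IsOrbitElt C'' pr ∧
        (∀ m ∈ dualM C, q m = orbitEmb C'' pr m) ∧
        ∀ C₂ pr₂, IsFace C C₂ → IsOrbitElt C₂ pr₂ →
          (∀ m ∈ dualM C, q m = orbitEmb C₂ pr₂ m) → C₂ = C'') := by
  subst hC
  exact ⟨fun _ => isTropHomOn_orbitEmb hface.subset, fun _ _ _ _ => eqOn_of_orbitEmb_eq,
    fun _ => exists_unique_isFace_orbitEmb s⟩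

/-- For a (strongly convex) rational polyhedral cone `C` and a face `C' ≺ C`, the
map `O_{C'}(𝕋) → X_C(𝕋)` extending a homomorphism by `∞` off `C'^⊥ ∩ M` is a
well-defined injection, and `X_C(𝕋)` is the disjoint union of the orbits
`O_{C''}(𝕋)` over all faces `C''` of `C`. -/
theorem stmt5 {d : ℕ} (s : Finset (Fin d → ℤ)) (C : Set (Fin d → ℝ))
    (hC : C = coneHullF s) (hsc : ∀ x ∈ C, -x ∈ C → x = 0)
    (C' : Set (Fin d → ℝ)) (hface : IsFace C C') :
    (∀ pr, IsOrbitElt C' pr → IsTropHomOn (dualM C) (orbitEmb C' pr)) ∧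
    (∀ pr pr', IsOrbitElt C' pr → IsOrbitElt C' pr' →
      orbitEmb C' pr = orbitEmb C' pr' → ∀ m ∈ perpM C', pr m = pr' m) ∧
    (∀ q : (Fin d → ℤ) → WithTop ℝ, IsTropHomOn (dualM C) q →
      ∃ C'' pr, IsFace C C'' ∧ IsOrbitElt C'' pr ∧
        (∀ m ∈ dualM C, q m = orbitEmb C'' pr m) ∧
        ∀ C₂ pr₂, IsFace C C₂ → IsOrbitElt C₂ pr₂ →
          (∀ m ∈ dualM C, q m = orbitEmb C₂ pr₂ m) → C₂ = C'') :=
  stmt5_general s C hC C' hface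
end

section
/- In the setting of a nef partition $\Delta = \Delta_1 + \cdots + \Delta_r$ with associated polytopes $\nabla_i$, for all $i,j \in \{1,\dots,r\}$ and all $m \in \Delta_i$, $n \in \nabla_j$ one has $\langle m, n\rangle \ge -\delta_{ij}$, where $\delta_{ij}$ is the Kronecker delta. -/
/-- Batyrev–Borisov pairing bound for a nef partition.  Here `E` is the set of
primitive ray generators of the normal fan of the reflexive polytope
`Δ = Δ 1 + ⋯ + Δ r`, `φ i` is the (convex, piecewise linear) support function of
`Δ i` (so `-(φ i n) ≤ ⟨m, n⟩` for `m ∈ Δ i`), `φ i 0 = 0`, `φ i (e) ∈ {0,1}` and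
`∑ i, φ i e = 1` for `e ∈ E`, and `∇ j = conv(0 ∪ {e ∈ E | φ j e = 1})`.
Then `⟨m, n⟩ ≥ -δ_{ij}` for all `m ∈ Δ i` and `n ∈ ∇ j`. -/
theorem stmt7 {d r : ℕ} (E : Finset (Fin d → ℝ)) (Δ : Fin r → Set (Fin d → ℝ))
    (φ : Fin r → (Fin d → ℝ) → ℝ)
    (hconv : ∀ i, ConvexOn ℝ Set.univ (φ i))
    (hzero : ∀ i, φ i 0 = 0)
    (hval : ∀ i, ∀ e ∈ E, φ i e = 0 ∨ φ i e = 1)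
    (hsum : ∀ e ∈ E, ∑ i, φ i e = 1)
    (hsupp : ∀ i (n m : Fin d → ℝ), m ∈ Δ i → -(φ i n) ≤ ∑ t, m t * n t) :
    ∀ i j (m n : Fin d → ℝ), m ∈ Δ i →
      n ∈ convexHull ℝ (insert 0 {e : Fin d → ℝ | e ∈ E ∧ φ j e = 1}) →
      -(if i = j then (1 : ℝ) else 0) ≤ ∑ t, m t * n t := by
  intro i j m n hm hn
  set δ : ℝ := if i = j then (1 : ℝ) else 0 with hδ
  have hφn : φ i n ≤ δ := by
    have hC : Convex ℝ {x : Fin d → ℝ | x ∈ Set.univ ∧ φ i x ≤ δ} :=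
      (hconv i).convex_le δ
    have hS : insert 0 {e : Fin d → ℝ | e ∈ E ∧ φ j e = 1}
        ⊆ {x : Fin d → ℝ | x ∈ Set.univ ∧ φ i x ≤ δ} := by
      rintro x (rfl | ⟨hxE, hxj⟩)
      · refine ⟨trivial, ?_⟩
        rw [hzero i]
        by_cases h : i = j <;> simp [hδ, h]
      · refine ⟨trivial, ?_⟩
        by_cases h : i = j
        · subst h; simp [hδ, hxj]
        · simp only [hδ, if_neg h]
          rcases hval i x hxE with h0 | h1
          · exact le_of_eq h0
          · exfalso
            have hpair : ({i, j} : Finset (Fin r)) ⊆ Finset.univ := Finset.subset_univ _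
            have hge : ∑ k ∈ ({i, j} : Finset (Fin r)), φ k x ≤ ∑ k, φ k x := by
              refine Finset.sum_le_sum_of_subset_of_nonneg hpair ?_
              intro k _ _
              rcases hval k x hxE with h' | h' <;> simp [h']
            rw [Finset.sum_pair h, hsum x hxE, h1, hxj] at hge
            linarith
    have := convexHull_min hS hC hn
    exact this.2
  have := hsupp i n m hm
  linarith
end

section
/- Let $\{n_{i,j} : 0 \le i \le r,\ 0 \le j \le k_i\}$ be a basis of a lattice $\tilde N$ with dual basis $\{m_{i,j}\}$ of $\tilde M$. For $1 \le l \le d+1$ (where $d+1 = \sum_i (k_i+1) - r$ and indices $i(l), j_i(l)$ come from a shuffle walk as in the paper), define $n_l := \sum_{i=0}^r n_{i, j_i(l-1)}$ and $m_1 := m_{i(1),0}$, $m_l := \sum_{j'=0}^{j_{i(l)}(l-1)} m_{i(l),j'} - \sum_{j'=0}^{j_{i(l-1)}(l-1)-1} m_{i(l-1),j'}$ for $l \ge 2$. Then $\langle m_l, n_{l'}\rangle = \delta_{l,l'}$ and $\langle m_l, n_{i,k_i}\rangle = 0$ for all $1 \le i \le r$ with $p_i = k_i$ excluded appropriately; in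 particular the $n_l$ together with the $n_{i,k_i}$ ($1 \le i \le r$) form a basis of $\tilde N_\mathbb{R}$. -/
open Finset

variable {r : ℕ}

/-- The walk data of a `(k 0, …, k r)`-shuffle, extended by a final step in
direction `0`: `jw 0 = 0`, at step `l` (for `1 ≤ l ≤ d + 1`) exactly the
coordinate `iw l` increases by one, the walk reaches `(k 0, …, k r)` at step
`d = ∑ i, k i`, and the extra step `d + 1` is in direction `0`. -/
def IsShuffleWalk (k : Fin (r + 1) → ℕ) (jw : ℕ → Fin (r + 1) → ℕ)
    (iw : ℕ → Fin (r + 1)) : Prop :=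
  (∀ i, jw 0 i = 0) ∧
  (∀ l, 1 ≤ l → l ≤ (∑ i, k i) + 1 →
    jw l (iw l) = jw (l - 1) (iw l) + 1 ∧ ∀ i, i ≠ iw l → jw l i = jw (l - 1) i) ∧
  (∀ i, jw (∑ i, k i) i = k i) ∧
  iw ((∑ i, k i) + 1) = 0

variable {k : Fin (r + 1) → ℕ} {jw : ℕ → Fin (r + 1) → ℕ} {iw : ℕ → Fin (r + 1)}

lemma walk_step_le (h : IsShuffleWalk k jw iw) {l : ℕ} (h1 : 1 ≤ l)
    (h2 : l ≤ (∑ i, k i) + 1) (i : Fin (r + 1)) : jw (l - 1) i ≤ jw l i := by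
  rcases eq_or_ne i (iw l) with rfl | hi
  · exact ((h.2.1 l h1 h2).1).ge.trans' (Nat.le_succ _)
  · exact ((h.2.1 l h1 h2).2 i hi).ge

lemma walk_mono (h : IsShuffleWalk k jw iw) {a b : ℕ} (hab : a ≤ b)
    (hb : b ≤ (∑ i, k i) + 1) (i : Fin (r + 1)) : jw a i ≤ jw b i := by
  induction b with
  | zero => exact le_of_eq (by rw [Nat.le_zero.mp hab])
  | succ b ih =>
    rcases Nat.eq_or_lt_of_le hab with rfl | hlt
    · exact le_rfl
    · have := walk_step_le h (l := b + 1) (by omega) hb i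
      simp only [Nat.add_sub_cancel] at this
      exact (ih (by omega) (by omega)).trans this

lemma walk_le_k (h : IsShuffleWalk k jw iw) {l : ℕ} (hl : l ≤ ∑ i, k i)
    (i : Fin (r + 1)) : jw l i ≤ k i := by
  rw [← h.2.2.1 i]
  exact walk_mono h hl (Nat.le_succ _) i

/-- `n_l := ∑ i, n_{i, j_i(l-1)}` in the lattice with basis `n_{i,j}`,
`0 ≤ i ≤ r`, `0 ≤ j ≤ k i` (coordinates w.r.t. that basis). -/
def nvec (k : Fin (r + 1) → ℕ) (jw : ℕ → Fin (r + 1) → ℕ) (l : ℕ) :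
    (Σ i : Fin (r + 1), Fin (k i + 1)) → ℤ :=
  fun x => if (x.2 : ℕ) = jw (l - 1) x.1 then 1 else 0

/-- `m_1 := m_{i(1),0}` and, for `l ≥ 2`,
`m_l := ∑_{j' ≤ j_{i(l)}(l-1)} m_{i(l),j'} - ∑_{j' < j_{i(l-1)}(l-1)} m_{i(l-1),j'}`
(coordinates w.r.t. the dual basis `m_{i,j}`). -/
def mvec (k : Fin (r + 1) → ℕ) (jw : ℕ → Fin (r + 1) → ℕ) (iw : ℕ → Fin (r + 1))
    (l : ℕ) : (Σ i : Fin (r + 1), Fin (k i + 1)) → ℤ :=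
  if l = 1 then fun x => if x.1 = iw 1 ∧ (x.2 : ℕ) = 0 then 1 else 0
  else fun x =>
    (if x.1 = iw l ∧ (x.2 : ℕ) ≤ jw (l - 1) (iw l) then 1 else 0) -
    (if x.1 = iw (l - 1) ∧ (x.2 : ℕ) < jw (l - 1) (iw (l - 1)) then 1 else 0)

/-- The pairing between the dual bases, in coordinates: `⟨m, n⟩ = ∑ x, m x * n x`. -/
def zpair {k : Fin (r + 1) → ℕ} (m n : (Σ i : Fin (r + 1), Fin (k i + 1)) → ℤ) : ℤ :=
  ∑ x, m x * n x

lemma zpair_single {k : Fin (r + 1) → ℕ} (m : (Σ i : Fin (r + 1), Fin (k i + 1)) → ℤ)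
    (p : Σ i : Fin (r + 1), Fin (k i + 1)) :
    zpair m (Pi.single p 1) = m p := by
  rw [zpair, Finset.sum_eq_single p]
  · rw [Pi.single_eq_same, mul_one]
  · intro b _ hb
    rw [Pi.single_eq_of_ne hb, mul_zero]
  · intro hp; exact absurd (Finset.mem_univ p) hp

lemma zpair_nvec {k : Fin (r + 1) → ℕ} {jw : ℕ → Fin (r + 1) → ℕ} {iw : ℕ → Fin (r + 1)}
    (h : IsShuffleWalk k jw iw) (m : (Σ i : Fin (r + 1), Fin (k i + 1)) → ℤ)
    {l' : ℕ} (hl' : l' ≤ (∑ i, k i) + 1) :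
    zpair m (nvec k jw l') =
      ∑ i, m ⟨i, ⟨jw (l' - 1) i, Nat.lt_succ_of_le (walk_le_k h (by omega) i)⟩⟩ := by
  rw [zpair, ← Finset.univ_sigma_univ, Finset.sum_sigma]
  refine Finset.sum_congr rfl fun i _ => ?_
  rw [Finset.sum_eq_single (⟨jw (l' - 1) i, Nat.lt_succ_of_le (walk_le_k h (by omega) i)⟩ :
      Fin (k i + 1))]
  · rw [nvec]; simp
  · intro b _ hb
    rw [nvec]
    simp only
    rw [if_neg, mul_zero]
    intro hc
    exact hb (Fin.ext hc)
  · intro hp; exact absurd (Finset.mem_univ _) hp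

lemma pairing_delta {k : Fin (r + 1) → ℕ} {jw : ℕ → Fin (r + 1) → ℕ} {iw : ℕ → Fin (r + 1)}
    (h : IsShuffleWalk k jw iw) {l l' : ℕ} (hl1 : 1 ≤ l) (hl2 : l ≤ (∑ i, k i) + 1)
    (hl'1 : 1 ≤ l') (hl'2 : l' ≤ (∑ i, k i) + 1) :
    zpair (mvec k jw iw l) (nvec k jw l') = if l = l' then 1 else 0 := by
  have hstep := h.2.1
  rw [zpair_nvec h _ hl'2]
  rcases eq_or_ne l 1 with rfl | hl1'
  · simp only [mvec, eq_self_iff_true, if_true, ite_and, Fin.val_mk]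
    rw [Finset.sum_ite_eq' Finset.univ (iw 1)]
    simp only [Finset.mem_univ, if_true]
    rcases eq_or_ne l' 1 with rfl | hl''
    · rw [if_pos (show jw (1 - 1) (iw 1) = 0 from h.1 (iw 1)), if_pos rfl]
    · have h1 : jw 1 (iw 1) = jw 0 (iw 1) + 1 := by
        have := (hstep 1 le_rfl (by omega)).1
        simpa using this
      have h2 : jw 1 (iw 1) ≤ jw (l' - 1) (iw 1) :=
        walk_mono h (by omega) (by omega) (iw 1)
      rw [if_neg (by omega), if_neg (by omega)]
  · simp only [mvec, if_neg hl1', ite_and, Fin.val_mk]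
    rw [Finset.sum_sub_distrib, Finset.sum_ite_eq' Finset.univ (iw l),
      Finset.sum_ite_eq' Finset.univ (iw (l - 1))]
    simp only [Finset.mem_univ, if_true]
    have hstepl := (hstep l hl1 hl2).1
    have hstepl1 := (hstep (l - 1) (by omega) (by omega)).1
    rcases lt_trichotomy l l' with hc | rfl | hc
    · have hA : jw l (iw l) ≤ jw (l' - 1) (iw l) := walk_mono h (by omega) (by omega) _
      have hB : jw (l - 1) (iw (l - 1)) ≤ jw (l' - 1) (iw (l - 1)) :=
        walk_mono h (by omega) (by omega) _
      rw [if_neg (by omega), if_neg (by omega), if_neg (by omega)]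
      ring
    · rw [if_pos le_rfl, if_neg (lt_irrefl _), if_pos rfl]
      ring
    · have hA : jw (l' - 1) (iw l) ≤ jw (l - 1) (iw l) :=
        walk_mono h (by omega) (by omega) _
      have hB : jw (l' - 1) (iw (l - 1)) ≤ jw (l - 1 - 1) (iw (l - 1)) :=
        walk_mono h (by omega) (by omega) _
      rw [if_pos (by omega), if_pos (by omega), if_neg (by omega)]
      ring

lemma pairing_single_zero {k : Fin (r + 1) → ℕ} {jw : ℕ → Fin (r + 1) → ℕ}
    {iw : ℕ → Fin (r + 1)} (h : IsShuffleWalk k jw iw) {l : ℕ} (hl1 : 1 ≤ l)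
    (hl2 : l ≤ (∑ i, k i) + 1) {i : Fin (r + 1)} (hi : i ≠ 0) :
    zpair (mvec k jw iw l) (Pi.single ⟨i, Fin.last (k i)⟩ 1) = 0 := by
  rw [zpair_single]
  rcases eq_or_ne l 1 with rfl | hl1'
  · simp only [mvec, eq_self_iff_true, if_true]
    rw [if_neg]
    rintro ⟨h1, h2⟩
    have hiw : i = iw 1 := h1
    have hk : k i = 0 := by simpa using h2
    rcases Nat.eq_zero_or_pos (∑ j, k j) with hd | hd
    · have h0 : iw ((∑ j, k j) + 1) = 0 := h.2.2.2
      rw [hd] at h0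
      exact hi (hiw.trans h0)
    · have hstep1 := (h.2.1 1 le_rfl (by omega)).1
      rw [← hiw] at hstep1
      have hle : jw 1 i ≤ k i := walk_le_k h (by omega) i
      have h0 : jw 0 i = 0 := h.1 i
      omega
  · simp only [mvec, if_neg hl1']
    have hkle : jw (l - 1) i ≤ k i := walk_le_k h (by omega) i
    have hnA : ¬((⟨i, Fin.last (k i)⟩ : Σ i : Fin (r + 1), Fin (k i + 1)).1 = iw l ∧
        (((⟨i, Fin.last (k i)⟩ : Σ i : Fin (r + 1), Fin (k i + 1)).2 : ℕ) ≤
          jw (l - 1) (iw l))) := by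
      rintro ⟨h1, h2⟩
      have hiw : i = iw l := h1
      have h2' : k i ≤ jw (l - 1) (iw l) := by simpa using h2
      have hstepl := (h.2.1 l hl1 hl2).1
      rw [← hiw] at hstepl h2'
      rcases Nat.lt_or_ge l ((∑ j, k j) + 1) with hlt | hge
      · have : jw l i ≤ k i := walk_le_k h (by omega) i
        omega
      · have hl : l = (∑ j, k j) + 1 := le_antisymm hl2 hge
        have h0 : iw l = 0 := hl ▸ h.2.2.2
        exact hi (hiw.trans h0)
    have hnB : ¬((⟨i, Fin.last (k i)⟩ : Σ i : Fin (r + 1), Fin (k i + 1)).1 = iw (l - 1) ∧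
        (((⟨i, Fin.last (k i)⟩ : Σ i : Fin (r + 1), Fin (k i + 1)).2 : ℕ) <
          jw (l - 1) (iw (l - 1)))) := by
      rintro ⟨h1, h2⟩
      have hiw : i = iw (l - 1) := h1
      have h2' : k i < jw (l - 1) (iw (l - 1)) := by simpa using h2
      rw [← hiw] at h2'
      omega
    rw [if_neg hnA, if_neg hnB, sub_zero]

/-- The real family consisting of the `n_l` (`1 ≤ l ≤ d + 1`) together with
the basis vectors `n_{i, k i}` for `i ≠ 0`. -/
def nFam (k : Fin (r + 1) → ℕ) (jw : ℕ → Fin (r + 1) → ℕ)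
    (y : Fin ((∑ i, k i) + 1) ⊕ {i : Fin (r + 1) // i ≠ 0}) :
    (Σ i : Fin (r + 1), Fin (k i + 1)) → ℝ :=
  match y with
  | Sum.inl l => fun x => ((nvec k jw ((l : ℕ) + 1) x : ℤ) : ℝ)
  | Sum.inr i => fun x =>
      (((Pi.single (⟨i.1, Fin.last (k i.1)⟩ : Σ i : Fin (r + 1), Fin (k i + 1)) (1 : ℤ) :
          (Σ i : Fin (r + 1), Fin (k i + 1)) → ℤ) x : ℤ) : ℝ)

section LinAlg

variable (k : Fin (r + 1) → ℕ) (jw : ℕ → Fin (r + 1) → ℕ) (iw : ℕ → Fin (r + 1))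

/-- Integer version of `nFam`. -/
def nZ (y : Fin ((∑ i, k i) + 1) ⊕ {i : Fin (r + 1) // i ≠ 0}) :
    (Σ i : Fin (r + 1), Fin (k i + 1)) → ℤ :=
  match y with
  | Sum.inl l => nvec k jw ((l : ℕ) + 1)
  | Sum.inr i => Pi.single ⟨i.1, Fin.last (k i.1)⟩ 1

/-- Dual functionals. -/
def mZ (z : Fin ((∑ i, k i) + 1) ⊕ {i : Fin (r + 1) // i ≠ 0}) :
    (Σ i : Fin (r + 1), Fin (k i + 1)) → ℤ :=
  match z with
  | Sum.inl l => mvec k jw iw ((l : ℕ) + 1)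
  | Sum.inr i => Pi.single ⟨i.1, Fin.last (k i.1)⟩ 1

/-- The pairing matrix. -/
noncomputable def Pmat :
    Matrix (Fin ((∑ i, k i) + 1) ⊕ {i : Fin (r + 1) // i ≠ 0})
      (Fin ((∑ i, k i) + 1) ⊕ {i : Fin (r + 1) // i ≠ 0}) ℝ :=
  Matrix.of fun y z => ((zpair (mZ k jw iw z) (nZ k jw y) : ℤ) : ℝ)

lemma nFam_eq_cast : ∀ y x, nFam k jw y x = ((nZ k jw y x : ℤ) : ℝ) := by
  rintro (l | i) x <;> rfl

lemma Pmat_eq (h : IsShuffleWalk k jw iw) :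
    Pmat k jw iw =
      Matrix.fromBlocks 1 (Matrix.of fun l i => Pmat k jw iw (Sum.inl l) (Sum.inr i)) 0 1 := by
  ext y z
  rcases y with l | i <;> rcases z with l' | i'
  · rw [Matrix.fromBlocks_apply₁₁, Pmat]
    simp only [Matrix.of_apply, mZ, nZ]
    rw [pairing_delta h (by omega) (by have := l'.isLt; omega) (by omega)
      (by have := l.isLt; omega)]
    rw [Matrix.one_apply]
    by_cases hc : l = l'
    · subst hc; simp
    · rw [if_neg (fun hcc => hc (by ext; omega)), if_neg hc]
      simp
  · rfl
  · rw [Matrix.fromBlocks_apply₂₁, Pmat]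
    simp only [Matrix.of_apply, mZ, nZ]
    rw [pairing_single_zero h (by omega) (by have := l'.isLt; omega) i.2]
    simp
  · rw [Matrix.fromBlocks_apply₂₂, Pmat]
    simp only [Matrix.of_apply, mZ, nZ]
    rw [zpair_single]
    rw [Matrix.one_apply]
    by_cases hc : i = i'
    · subst hc; simp
    · rw [if_neg hc]
      have hne : (⟨i.1, Fin.last (k i.1)⟩ : Σ j : Fin (r + 1), Fin (k j + 1)) ≠
          ⟨i'.1, Fin.last (k i'.1)⟩ := by
        intro hcc
        rw [Sigma.mk.inj_iff] at hcc
        exact hc (Subtype.ext hcc.1)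
      rw [Pi.single_eq_of_ne hne]
      simp

lemma Pmat_det (h : IsShuffleWalk k jw iw) : (Pmat k jw iw).det = 1 := by
  rw [Pmat_eq k jw iw h, Matrix.det_fromBlocks_zero₂₁, Matrix.det_one, Matrix.det_one, mul_one]

lemma nFam_li (h : IsShuffleWalk k jw iw) : LinearIndependent ℝ (nFam k jw) := by
  rw [Fintype.linearIndependent_iff]
  intro g hg y
  have hunit : IsUnit (Pmat k jw iw).det := by
    rw [Pmat_det k jw iw h]; exact isUnit_one
  have key : Matrix.vecMul g (Pmat k jw iw) = 0 := by
    funext z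
    have hx : ∀ x, ∑ y', g y' * ((nZ k jw y' x : ℤ) : ℝ) = 0 := by
      intro x
      have := congrFun hg x
      rw [Finset.sum_apply] at this
      simpa [nFam_eq_cast k jw] using this
    calc Matrix.vecMul g (Pmat k jw iw) z
        = ∑ y', g y' * ∑ x, ((mZ k jw iw z x : ℤ) : ℝ) * ((nZ k jw y' x : ℤ) : ℝ) := by
          rw [Matrix.vecMul, dotProduct]
          refine Finset.sum_congr rfl fun y' _ => ?_
          rw [Pmat, Matrix.of_apply, zpair]
          push_cast
          ring_nf
      _ = ∑ x, ((mZ k jw iw z x : ℤ) : ℝ) * ∑ y', g y' * ((nZ k jw y' x : ℤ) : ℝ) := by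
          simp only [Finset.mul_sum]
          rw [Finset.sum_comm]
          refine Finset.sum_congr rfl fun x _ => Finset.sum_congr rfl fun y' _ => ?_
          ring
      _ = 0 := by
          simp only [hx, mul_zero, Finset.sum_const_zero]
  have hg0 : g = 0 := by
    have h1 : Matrix.vecMul (Matrix.vecMul g (Pmat k jw iw)) (Pmat k jw iw)⁻¹ = g := by
      rw [Matrix.vecMul_vecMul, Matrix.mul_nonsing_inv _ hunit, Matrix.vecMul_one]
    rw [key, Matrix.zero_vecMul] at h1
    exact h1.symm
  exact congrFun hg0 y

lemma nFam_span (h : IsShuffleWalk k jw iw) :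
    Submodule.span ℝ (Set.range (nFam k jw)) = ⊤ := by
  refine (nFam_li k jw iw h).span_eq_top_of_card_eq_finrank ?_
  rw [Module.finrank_pi]
  rw [Fintype.card_sum, Fintype.card_sigma]
  simp only [Fintype.card_fin]
  have h1 : Fintype.card {i : Fin (r + 1) // i ≠ 0} = r := by
    rw [Fintype.card_subtype_compl, Fintype.card_subtype_eq, Fintype.card_fin]
    omega
  rw [h1]
  have h2 : ∑ i : Fin (r + 1), (k i + 1) = (∑ i : Fin (r + 1), k i) + (r + 1) := by
    rw [Finset.sum_add_distrib, Finset.sum_const, Finset.card_univ, Fintype.card_fin, smul_eq_mul,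
      mul_one]
  omega

end LinAlg

/-- Duality of the vectors `m_l` and `n_l` attached to a shuffle walk:
`⟨m_l, n_{l'}⟩ = δ_{l,l'}`, `⟨m_l, n_{i,k_i}⟩ = 0` for `1 ≤ i ≤ r`; in
particular the `n_l` (`1 ≤ l ≤ d+1`) together with the `n_{i,k_i}` (`i ≠ 0`)
form a basis of `Ñ_ℝ`. -/
theorem stmt8 (k : Fin (r + 1) → ℕ) (jw : ℕ → Fin (r + 1) → ℕ) (iw : ℕ → Fin (r + 1))
    (hwalk : IsShuffleWalk k jw iw) :
    (∀ l l', 1 ≤ l → l ≤ (∑ i, k i) + 1 → 1 ≤ l' → l' ≤ (∑ i, k i) + 1 →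
      zpair (mvec k jw iw l) (nvec k jw l') = if l = l' then 1 else 0) ∧
    (∀ l, 1 ≤ l → l ≤ (∑ i, k i) + 1 → ∀ i : Fin (r + 1), i ≠ 0 →
      zpair (mvec k jw iw l) (Pi.single ⟨i, Fin.last (k i)⟩ 1) = 0) ∧
    LinearIndependent ℝ (nFam k jw) ∧
    Submodule.span ℝ (Set.range (nFam k jw)) = ⊤ := by
  exact ⟨fun l l' hl1 hl2 hl'1 hl'2 => pairing_delta hwalk hl1 hl2 hl'1 hl'2,
    fun l hl1 hl2 i hi => pairing_single_zero hwalk hl1 hl2 hi,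
    nFam_li k jw iw hwalk, nFam_span k jw iw hwalk⟩
end

section
/- Let $\mathcal S$ be a $(k_0,\dots,k_r)$-shuffle with walk data $j_i(l)$, $i(l)$ as above, and set $n_l = \sum_{i=0}^r n_{i,j_i(l-1)}$ for $1 \le l \le d+1$ in the lattice with basis $\{n_{i,j}\}$. Then the vectors $n_1, \dots, n_{d+1}, n_{1,k_1}, \dots, n_{r,k_r}$ form a $\mathbb{Z}$-basis of the lattice $\tilde N = \bigoplus_{i,j} \mathbb{Z}\, n_{i,j}$; in particular the real span decomposes as the internal direct sum $\tilde N_\mathbb{R} = (\bigoplus_{l=1}^{d+1} \mathbb{R}\, n_l) \oplus (\bigoplus_{i=1}^r \mathbb{R}\, n_{i,k_i})$. -/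
/-! Since `n_{d+1} = ∑ i, n_{i,k_i}`, the vectors `n_{i,j_i(d)} = n_{i,k_i}` all lie in the span
of the family. Walking backwards, `n_{l+1} = ∑ i, n_{i,j_i(l)}` and the positions `j(l)` and
`j(l+1)` differ only in the coordinate `i(l+1)`, so every `n_{i,j_i(l)}` lies in the span; since
`j_i` climbs from `0` to `k_i` in unit steps, this covers every `n_{i,j}`. A spanning family of
`d + r + 1` vectors in `ℤ^{d+r+1}` is a basis, as surjective endomorphisms of finitely generated
modules are injective. -/

open Finset

variable {r : ℕ}

open Submodule

theorem Submodule.mem_of_sum_mem {R M ι : Type*} [Ring R] [AddCommGroup M] [Module R M]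
    [Fintype ι] [DecidableEq ι] {S : Submodule R M} {f : ι → M} (i : ι)
    (hsum : ∑ j, f j ∈ S) (hf : ∀ j, j ≠ i → f j ∈ S) : f i ∈ S := by
  rw [← Finset.add_sum_erase _ f (Finset.mem_univ i)] at hsum
  exact (S.add_mem_iff_left (S.sum_mem fun j hj => hf j (ne_of_mem_erase hj))).1 hsum

/-- Indexed by `c : ℕ` rather than `Fin (k i + 1)`, so that no bound is needed; it is `0` when
`k i < c`. -/
def unitVec (k : Fin (r + 1) → ℕ) (i : Fin (r + 1)) (c : ℕ) :
    (Σ i : Fin (r + 1), Fin (k i + 1)) → ℤ :=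
  fun x => if x.1 = i ∧ (x.2 : ℕ) = c then 1 else 0

theorem unitVec_eq_single (k : Fin (r + 1) → ℕ) (i : Fin (r + 1)) (c : Fin (k i + 1)) :
    unitVec k i c = Pi.single (⟨i, c⟩ : Σ i : Fin (r + 1), Fin (k i + 1)) 1 := by
  funext ⟨i', c'⟩
  by_cases h : i' = i
  · subst h
    simp [unitVec, Pi.single_apply, Fin.val_inj]
  · simp [unitVec, h]

theorem nvec_succ_eq_sum_unitVec (k : Fin (r + 1) → ℕ) (jw : ℕ → Fin (r + 1) → ℕ) (m : ℕ) :
    nvec k jw (m + 1) = ∑ i, unitVec k i (jw m i) := by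
  funext x
  rw [Finset.sum_apply, Finset.sum_eq_single x.1]
  · simp [nvec, unitVec]
  · exact fun i _ hi => if_neg fun h => hi h.1.symm
  · exact fun h => absurd (Finset.mem_univ _) h

namespace IsShuffleWalk

variable {k : Fin (r + 1) → ℕ} {jw : ℕ → Fin (r + 1) → ℕ} {iw : ℕ → Fin (r + 1)}

theorem succ_of_ne (hw : IsShuffleWalk k jw iw) {m : ℕ} (hm : m ≤ ∑ i, k i) {i : Fin (r + 1)}
    (hi : i ≠ iw (m + 1)) : jw (m + 1) i = jw m i :=
  (hw.2.1 (m + 1) (by omega) (by omega)).2 i hi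

theorem succ_le (hw : IsShuffleWalk k jw iw) {m : ℕ} (hm : m ≤ ∑ i, k i) (i : Fin (r + 1)) :
    jw (m + 1) i ≤ jw m i + 1 := by
  by_cases hi : i = iw (m + 1)
  · subst hi
    exact (hw.2.1 (m + 1) (by omega) (by omega)).1.le
  · exact (hw.succ_of_ne hm hi).le.trans (Nat.le_succ _)

theorem exists_walk_eq (hw : IsShuffleWalk k jw iw) {i : Fin (r + 1)} {c : ℕ} (hc : c ≤ k i) :
    ∃ m ≤ ∑ i, k i, jw m i = c := by
  suffices h : ∀ l ≤ ∑ i, k i, ∀ c ≤ jw l i, ∃ m ≤ l, jw m i = c by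
    obtain ⟨m, hm, hmc⟩ := h _ le_rfl c (hw.2.2.1 i ▸ hc)
    exact ⟨m, hm, hmc⟩
  intro l
  induction l with
  | zero => exact fun _ c hc => ⟨0, le_rfl, by have := hw.1 i; omega⟩
  | succ l ih =>
    intro hl c hc
    rcases Nat.lt_or_ge (jw l i) c with hlt | hle
    · exact ⟨l + 1, le_rfl, by have := hw.succ_le (by omega : l ≤ _) i; omega⟩
    · obtain ⟨m, hm, hmc⟩ := ih (by omega) c hle
      exact ⟨m, by omega, hmc⟩

end IsShuffleWalk

def shuffleFamily (k : Fin (r + 1) → ℕ) (jw : ℕ → Fin (r + 1) → ℕ) :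
    Fin ((∑ i, k i) + 1) ⊕ {i : Fin (r + 1) // i ≠ 0} → (Σ i : Fin (r + 1), Fin (k i + 1)) → ℤ :=
  Sum.elim (fun l => nvec k jw ((l : ℕ) + 1)) (fun i => unitVec k i.1 (k i.1))

theorem unitVec_walk_mem_span {k : Fin (r + 1) → ℕ} {jw : ℕ → Fin (r + 1) → ℕ}
    {iw : ℕ → Fin (r + 1)} (hw : IsShuffleWalk k jw iw) {m : ℕ} (hm : m ≤ ∑ i, k i)
    (i : Fin (r + 1)) : unitVec k i (jw m i) ∈ span ℤ (Set.range (shuffleFamily k jw)) := by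
  set S := span ℤ (Set.range (shuffleFamily k jw))
  have sum_mem : ∀ m ≤ ∑ i, k i, ∑ i, unitVec k i (jw m i) ∈ S := fun m hm =>
    nvec_succ_eq_sum_unitVec k jw m ▸ subset_span ⟨Sum.inl ⟨m, by omega⟩, rfl⟩
  induction hm using Nat.decreasingInduction generalizing i with
  | self =>
    have last_mem : ∀ j, j ≠ 0 → unitVec k j (jw (∑ i, k i) j) ∈ S := fun j hj =>
      hw.2.2.1 j ▸ subset_span ⟨Sum.inr ⟨j, hj⟩, rfl⟩
    by_cases hi : i = 0
    · subst hi
      exact mem_of_sum_mem (f := fun j => unitVec k j (jw _ j)) 0 (sum_mem _ le_rfl) last_mem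
    · exact last_mem i hi
  | of_succ m hm ih =>
    have ih' : ∀ j, j ≠ iw (m + 1) → unitVec k j (jw m j) ∈ S := fun j hj =>
      hw.succ_of_ne hm.le hj ▸ ih j
    by_cases hi : i = iw (m + 1)
    · subst hi
      exact mem_of_sum_mem (f := fun j => unitVec k j (jw m j)) _ (sum_mem m hm.le) ih'
    · exact ih' i hi

theorem span_shuffleFamily_eq_top {k : Fin (r + 1) → ℕ} {jw : ℕ → Fin (r + 1) → ℕ}
    {iw : ℕ → Fin (r + 1)} (hw : IsShuffleWalk k jw iw) :
    span ℤ (Set.range (shuffleFamily k jw)) = ⊤ := by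
  rw [eq_top_iff, ← (Pi.basisFun ℤ _).span_eq, span_le]
  rintro _ ⟨⟨i, c⟩, rfl⟩
  obtain ⟨m, hm, hmc⟩ := hw.exists_walk_eq (Nat.lt_succ_iff.1 c.isLt)
  rw [Pi.basisFun_apply, ← unitVec_eq_single, ← hmc]
  exact unitVec_walk_mem_span hw hm i

theorem card_sigma_fin_succ_eq (k : Fin (r + 1) → ℕ) :
    Fintype.card (Σ i : Fin (r + 1), Fin (k i + 1)) =
      Fintype.card (Fin ((∑ i, k i) + 1) ⊕ {i : Fin (r + 1) // i ≠ 0}) := by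
  simp [Finset.sum_add_distrib, Fintype.card_subtype_compl]
  omega

/-- For a `(k 0, …, k r)`-shuffle walk, the vectors `n_1, …, n_{d+1}` together
with `n_{1,k 1}, …, n_{r,k r}` form a `ℤ`-basis of the lattice
`Ñ = ⊕_{i,j} ℤ n_{i,j}` (and hence their real spans give an internal direct sum
decomposition of `Ñ_ℝ`). -/
theorem stmt9 (k : Fin (r + 1) → ℕ) (jw : ℕ → Fin (r + 1) → ℕ) (iw : ℕ → Fin (r + 1))
    (hwalk : IsShuffleWalk k jw iw) :
    ∃ b : Module.Basis (Fin ((∑ i, k i) + 1) ⊕ {i : Fin (r + 1) // i ≠ 0}) ℤ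
        ((Σ i : Fin (r + 1), Fin (k i + 1)) → ℤ),
      (∀ l : Fin ((∑ i, k i) + 1), b (Sum.inl l) = nvec k jw ((l : ℕ) + 1)) ∧
      (∀ i : {i : Fin (r + 1) // i ≠ 0},
        b (Sum.inr i) =
          Pi.single (⟨i.1, Fin.last (k i.1)⟩ : Σ i : Fin (r + 1), Fin (k i + 1)) 1) := by
  refine ⟨basisOfTopLeSpanOfCardEqFinrank (shuffleFamily k jw)
    (span_shuffleFamily_eq_top hwalk).ge
    (by rw [Module.finrank_fintype_fun_eq_card, card_sigma_fin_succ_eq]), fun l => ?_, fun i => ?_⟩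
  · simp [shuffleFamily]
  · simpa [shuffleFamily] using unitVec_eq_single k i.1 (Fin.last _)
end

section
/- For any subset $S$ of $\mathbb{R}^n$, the conic hull of $S$ is convex and closed under nonnegative scalar multiplication, and if $S$ is finite then the conic hull of $S$ is equal to the intersection of all closed half-spaces $\{x : \langle a, x\rangle \ge 0\}$ containing $S$ (Farkas/Weyl–Minkowski duality: a finitely generated cone is polyhedral, i.e. $\mathrm{cone}(S) = (\mathrm{cone}(S)^\vee)^\vee$). -/
/-- The conic hull `cone(S) = {∑ λ_i s_i : λ_i ≥ 0, s_i ∈ S}` of `S ⊆ ℝ^n`. -/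
def coneHull {n : ℕ} (S : Set (Fin n → ℝ)) : Set (Fin n → ℝ) :=
  {x | ∃ (m : ℕ) (c : Fin m → ℝ) (v : Fin m → (Fin n → ℝ)),
    (∀ i, 0 ≤ c i) ∧ (∀ i, v i ∈ S) ∧ x = ∑ i, c i • v i}

/-! A finitely generated cone is closed: by the conic Carathéodory theorem it is the finite union
of the cones spanned by linearly independent subsets of the generators, and each of those is the
image of the closed orthant under an injective linear map. Farkas' lemma (Hahn–Banach separation
of a point from a closed convex cone) then cuts off every point outside the cone by a half-space
containing the generators, and on `ℝⁿ` every linear functional is `x ↦ ∑ i, a i * x i`. -/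

open Finset

namespace PointedCone

section OrderedSemiring

variable {𝕜 E : Type*} [Semiring 𝕜] [PartialOrder 𝕜] [IsOrderedRing 𝕜]
  [AddCommMonoid E] [Module 𝕜 E]

lemma mem_hull_finset_iff {s : Finset E} {x : E} :
    x ∈ hull 𝕜 (s : Set E) ↔ ∃ c : E → 𝕜, (∀ y ∈ s, 0 ≤ c y) ∧ ∑ y ∈ s, c y • y = x := by
  classical
  rw [Submodule.mem_span_finset]
  constructor
  · rintro ⟨f, -, rfl⟩
    exact ⟨fun y => f y, fun y _ => (f y).2, rfl⟩
  · rintro ⟨c, hc, rfl⟩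
    refine ⟨fun y => if hy : y ∈ s then ⟨c y, hc y hy⟩ else 0, fun y hy => ?_,
      sum_congr rfl fun y hy => by simp [hy]⟩
    by_contra hys
    simp [mem_coe.not.1 hys] at hy

lemma hull_range_eq_image {ι : Type*} [Fintype ι] (v : ι → E) :
    (hull 𝕜 (Set.range v) : Set E) = Fintype.linearCombination 𝕜 v '' Set.Ici 0 := by
  ext x
  simp only [SetLike.mem_coe, Submodule.mem_span_range_iff_exists_fun, Set.mem_image,
    Set.mem_Ici, Fintype.linearCombination_apply]
  constructor
  · rintro ⟨c, rfl⟩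
    exact ⟨fun i => c i, fun i => (c i).2, rfl⟩
  · rintro ⟨c, hc, rfl⟩
    exact ⟨fun i => ⟨c i, hc i⟩, rfl⟩

end OrderedSemiring

section OrderedField

variable {𝕜 E : Type*} [Field 𝕜] [LinearOrder 𝕜] [IsStrictOrderedRing 𝕜]
  [AddCommGroup E] [Module 𝕜 E]

lemma exists_pos_relation_of_not_linearIndepOn {t : Finset E}
    (ht : ¬LinearIndepOn 𝕜 id (t : Set E)) :
    ∃ g : E → 𝕜, ∑ y ∈ t, g y • y = 0 ∧ ∃ y ∈ t, 0 < g y := by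
  classical
  simp only [linearIndepOn_iff', id, not_forall] at ht
  obtain ⟨u, g, hut, hg, y, hyu, hgy⟩ := ht
  rw [coe_subset] at hut
  set g' : E → 𝕜 := fun z => if z ∈ u then g z else 0
  have hsum : ∑ z ∈ t, g' z • z = 0 := by
    simp_rw [g', ite_smul, zero_smul]
    rw [sum_ite_mem, inter_eq_right.2 hut, hg]
  have hg'y : g' y = g y := if_pos hyu
  rcases lt_or_gt_of_ne hgy with hneg | hpos
  · exact ⟨-g', by simp only [Pi.neg_apply, neg_smul, sum_neg_distrib, hsum, neg_zero],
      y, hut hyu, by simp [hg'y, hneg]⟩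
  · exact ⟨g', hsum, y, hut hyu, hg'y ▸ hpos⟩

lemma exists_mem_hull_erase_of_not_linearIndepOn [DecidableEq E] {t : Finset E} {x : E}
    (ht : ¬LinearIndepOn 𝕜 id (t : Set E)) (hx : x ∈ hull 𝕜 (t : Set E)) :
    ∃ y ∈ t, x ∈ hull 𝕜 (t.erase y : Set E) := by
  obtain ⟨c, hc, rfl⟩ := mem_hull_finset_iff.1 hx
  obtain ⟨g, hg, y₁, hy₁, hgy₁⟩ := exists_pos_relation_of_not_linearIndepOn ht
  -- Subtract the largest multiple `r • g` that keeps all coefficients nonnegative;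
  -- the coefficient of a minimiser `y₀` of `c / g` on `{g > 0}` becomes zero.
  obtain ⟨y₀, hy₀, hmin⟩ := (t.filter (0 < g ·)).exists_min_image (fun y => c y / g y)
    ⟨y₁, mem_filter.2 ⟨hy₁, hgy₁⟩⟩
  rw [mem_filter] at hy₀
  set r := c y₀ / g y₀
  have hc' : ∀ y ∈ t, 0 ≤ c y - r * g y := by
    intro y hy
    rcases le_or_gt (g y) 0 with hgy | hgy
    · nlinarith [hc y hy, div_nonneg (hc _ hy₀.1) hy₀.2.le]
    · have := hmin y (mem_filter.2 ⟨hy, hgy⟩)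
      rw [le_div_iff₀ hgy] at this
      linarith
  have hc'y₀ : c y₀ - r * g y₀ = 0 := by simp [r, div_mul_cancel₀ _ hy₀.2.ne']
  have hsum : ∑ y ∈ t, (c y - r * g y) • y = ∑ y ∈ t, c y • y := by
    simp [sub_smul, mul_smul, sum_sub_distrib, ← smul_sum, hg]
  refine ⟨y₀, hy₀.1, mem_hull_finset_iff.2 ⟨fun y => c y - r * g y,
    fun y hy => hc' y (mem_of_mem_erase hy), ?_⟩⟩
  rw [sum_erase _ (by simp [hc'y₀]), hsum]

theorem exists_linearIndepOn_of_mem_hull_finset {s : Finset E} {x : E}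
    (hx : x ∈ hull 𝕜 (s : Set E)) :
    ∃ t ⊆ s, LinearIndepOn 𝕜 id (t : Set E) ∧ x ∈ hull 𝕜 (t : Set E) := by
  classical
  induction s using Finset.strongInduction with
  | H s ih =>
    by_cases hs : LinearIndepOn 𝕜 id (s : Set E)
    · exact ⟨s, subset_rfl, hs, hx⟩
    · obtain ⟨y, hy, hxy⟩ := exists_mem_hull_erase_of_not_linearIndepOn hs hx
      obtain ⟨t, hts, ht, hxt⟩ := ih _ (erase_ssubset hy) hxy
      exact ⟨t, hts.trans (erase_subset _ _), ht, hxt⟩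

end OrderedField

section Topology

variable {E : Type*} [AddCommGroup E] [Module ℝ E] [TopologicalSpace E]
  [IsTopologicalAddGroup E] [ContinuousSMul ℝ E] [T2Space E]

theorem isClosed_hull_range {ι : Type*} [Finite ι] {v : ι → E} (hv : LinearIndependent ℝ v) :
    IsClosed (hull ℝ (Set.range v) : Set E) := by
  have := Fintype.ofFinite ι
  rw [hull_range_eq_image]
  exact (LinearMap.isClosedEmbedding_of_injective (LinearMap.ker_eq_bot.2
    hv.fintypeLinearCombination_injective)).isClosedMap _ isClosed_Ici

theorem isClosed_hull_of_finite {s : Set E} (hs : s.Finite) : IsClosed (hull ℝ s : Set E) := by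
  classical
  lift s to Finset E using hs
  have hunion : (hull ℝ (s : Set E) : Set E) =
      ⋃ t ∈ s.powerset.filter (fun t : Finset E => LinearIndepOn ℝ id (t : Set E)),
        (hull ℝ (t : Set E) : Set E) := by
    refine subset_antisymm (fun x hx => ?_) (Set.iUnion₂_subset fun t ht => ?_)
    · obtain ⟨t, hts, ht, hxt⟩ := exists_linearIndepOn_of_mem_hull_finset hx
      exact Set.mem_biUnion (mem_filter.2 ⟨mem_powerset.2 hts, ht⟩) hxt
    · exact Submodule.span_mono (coe_subset.2 (mem_powerset.1 (mem_filter.1 ht).1))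
  rw [hunion]
  refine isClosed_biUnion_finset fun t ht => ?_
  simpa using isClosed_hull_range (mem_filter.1 ht).2

variable [LocallyConvexSpace ℝ E]

theorem mem_hull_iff_of_finite {s : Set E} (hs : s.Finite) {x : E} :
    x ∈ hull ℝ s ↔ ∀ f : StrongDual ℝ E, (∀ y ∈ s, 0 ≤ f y) → 0 ≤ f x := by
  refine ⟨fun hx f hf => Submodule.span_le (p := (positive ℝ ℝ).comap f.toLinearMap).2 hf hx,
    fun h => ?_⟩
  by_contra hx
  let C : ProperCone ℝ E := ⟨hull ℝ s, isClosed_hull_of_finite hs⟩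
  obtain ⟨f, hfC, hfx⟩ := C.hyperplane_separation_point hx
  exact (h f fun y hy => hfC y (subset_hull hy)).not_gt hfx

end Topology

end PointedCone

lemma coneHull_eq_hull {n : ℕ} (S : Set (Fin n → ℝ)) :
    coneHull S = PointedCone.hull ℝ S := by
  ext x
  simp only [coneHull, Set.mem_ofPred_eq, SetLike.mem_coe, Submodule.mem_span_set']
  constructor
  · rintro ⟨m, c, v, hc, hv, rfl⟩
    exact ⟨m, fun i => ⟨c i, hc i⟩, fun i => ⟨v i, hv i⟩, rfl⟩
  · rintro ⟨m, c, v, rfl⟩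
    exact ⟨m, fun i => c i, fun i => v i, fun i => (c i).2, fun i => (v i).2, rfl⟩

/-- The conic hull of any `S ⊆ ℝ^n` is convex and closed under nonnegative
scalar multiplication, and (Farkas/Weyl–Minkowski duality) if `S` is finite
then `cone(S)` equals the intersection of all closed half-spaces
`{x : ⟨a, x⟩ ≥ 0}` containing `S`, i.e. `cone(S) = (cone(S)^∨)^∨`. -/
theorem stmt10 {n : ℕ} (S : Set (Fin n → ℝ)) :
    Convex ℝ (coneHull S) ∧
    (∀ x ∈ coneHull S, ∀ t : ℝ, 0 ≤ t → t • x ∈ coneHull S) ∧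
    (S.Finite → coneHull S =
      {x | ∀ a : Fin n → ℝ, (∀ s ∈ S, 0 ≤ ∑ i, a i * s i) → 0 ≤ ∑ i, a i * x i}) := by
  rw [coneHull_eq_hull]
  refine ⟨(PointedCone.hull ℝ S).convex,
    fun x hx t ht => Submodule.smul_mem _ (⟨t, ht⟩ : {c : ℝ // 0 ≤ c}) hx, fun hS => ?_⟩
  ext x
  rw [SetLike.mem_coe, PointedCone.mem_hull_iff_of_finite hS,
    ((dotProductEquiv ℝ (Fin n)).trans LinearMap.toContinuousLinearMap).surjective.forall]
  simp [dotProduct]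
end

section
/- Let $f_i(n) = \min_{m \in A_i}(c_m + \langle m, n\rangle)$, $1 \le i \le r$, be tropical polynomials on $N_\mathbb{R}$, and let $\sigma \subset N_\mathbb{R}$ be a subset such that there exist $m_i \in A_i \setminus \{0\}$ ($0 \in A_i$, $c_0 = 0$) with the property that for every $n_0 \in \sigma$ the minimum of $f_i$ at $n_0$ is attained exactly by the monomials $0$ and $m_i$. Suppose $v \in N_\mathbb{R}$ satisfies $\langle m_i, v \rangle = -\delta_{ij}$ when $v$ belongs to a designated set $B_j$, and $\langle m, v\rangle \ge -\delta_{ij}$ for all $m \in A_i$, $v \in B_j$. Then for $n = n_0 + \sum_{j,k} \lambda_{j,k} v_{j,k}$ with $n_0 \in \sigma$, $\lambda_{j,k} \ge 0$, $v_{j,k} \in B_j$: if some $\lambda_{i,k} > 0$, then the minimum of $f_i$ at $n$ is attained only by the monomial $m_i$, so $n$ does not lie in the tropical hypersurface of $f_i$. -/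
open Finset

/-- Key tropical computation: let `f i (n) = min_{m ∈ A i} (c i m + ⟨m, n⟩)` be
tropical polynomials with `0 ∈ A i`, `c i 0 = 0`, and suppose on the region `σ`
the minimum of `f i` is attained exactly by the monomials `0` and `m_i ≠ 0`.
If the directions `v ∈ B j` satisfy `⟨m_i, v⟩ = -δ_{ij}` and
`⟨m, v⟩ ≥ -δ_{ij}` for all `m ∈ A i`, then for
`n = n₀ + ∑ λ_{a} v_{a}` with `n₀ ∈ σ`, `λ_a ≥ 0`, `v_a ∈ B (j_a)`:
whenever some `λ_a > 0` with `j_a = i`, the minimum of `f i` at `n` is attained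
only by `m_i` (every other monomial is strictly larger), so `n` does not lie in
the tropical hypersurface of `f i`. -/
theorem stmt11 {n r : ℕ} {ι : Type*}
    (A : Fin r → Finset (Fin n → ℝ)) (c : Fin r → (Fin n → ℝ) → ℝ)
    (h0A : ∀ i, (0 : Fin n → ℝ) ∈ A i) (hc0 : ∀ i, c i 0 = 0)
    (mi : Fin r → (Fin n → ℝ)) (hmi : ∀ i, mi i ∈ A i) (hmi0 : ∀ i, mi i ≠ 0)
    (σ : Set (Fin n → ℝ)) (B : Fin r → Set (Fin n → ℝ))
    (hmin : ∀ i, ∀ n₀ ∈ σ,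
      (∀ m ∈ A i, 0 ≤ c i m + ∑ t, m t * n₀ t) ∧
      (c i (mi i) + ∑ t, mi i t * n₀ t = 0) ∧
      (∀ m ∈ A i, m ≠ 0 → m ≠ mi i → 0 < c i m + ∑ t, m t * n₀ t))
    (hB1 : ∀ i j, ∀ v ∈ B j, ∑ t, mi i t * v t = -(if i = j then (1 : ℝ) else 0))
    (hB2 : ∀ i j, ∀ m ∈ A i, ∀ v ∈ B j,
      -(if i = j then (1 : ℝ) else 0) ≤ ∑ t, m t * v t) :
    ∀ n₀ ∈ σ, ∀ (s : Finset ι) (lam : ι → ℝ) (jj : ι → Fin r) (vv : ι → Fin n → ℝ),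
      (∀ a, 0 ≤ lam a) → (∀ a ∈ s, vv a ∈ B (jj a)) →
      ∀ i, (∃ a ∈ s, jj a = i ∧ 0 < lam a) →
      ∀ m ∈ A i, m ≠ mi i →
        c i (mi i) + ∑ t, mi i t * (n₀ + ∑ a ∈ s, lam a • vv a) t <
          c i m + ∑ t, m t * (n₀ + ∑ a ∈ s, lam a • vv a) t := by
  intro n₀ hn₀ s lam jj vv hlam hvv i ⟨a₀, ha₀s, hja₀, hla₀⟩ m hm hmne
  have key : ∀ (m : Fin n → ℝ),
      (∑ t, m t * (n₀ + ∑ a ∈ s, lam a • vv a) t)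
        = (∑ t, m t * n₀ t) + ∑ a ∈ s, lam a * ∑ t, m t * vv a t := by
    intro m
    simp only [Pi.add_apply, Finset.sum_apply, Pi.smul_apply, smul_eq_mul, mul_add,
      Finset.sum_add_distrib, Finset.mul_sum]
    congr 1
    rw [Finset.sum_comm]
    exact Finset.sum_congr rfl fun a _ => Finset.sum_congr rfl fun t _ => by ring
  rw [key, key]
  set S : ℝ := ∑ a ∈ s, lam a * (if i = jj a then (1 : ℝ) else 0) with hS
  have hSpos : 0 < S := by
    have h1 : lam a₀ * (if i = jj a₀ then (1 : ℝ) else 0) ≤ S :=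
      Finset.single_le_sum (f := fun a => lam a * (if i = jj a then (1:ℝ) else 0)) (fun a _ => mul_nonneg (hlam a) (by split <;> norm_num)) ha₀s
    rw [hja₀, if_pos rfl, mul_one] at h1
    exact hla₀.trans_le h1
  have hLHS : (∑ a ∈ s, lam a * ∑ t, mi i t * vv a t) = -S := by
    rw [hS, ← Finset.sum_neg_distrib]
    refine Finset.sum_congr rfl fun a ha => ?_
    rw [hB1 i (jj a) (vv a) (hvv a ha)]; ring
  have hRHS : -S ≤ ∑ a ∈ s, lam a * ∑ t, m t * vv a t := by
    rw [hS, ← Finset.sum_neg_distrib]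
    refine Finset.sum_le_sum fun a ha => ?_
    have := hB2 i (jj a) m hm (vv a) (hvv a ha)
    have h2 : -(if i = jj a then (1:ℝ) else 0) ≤ ∑ t, m t * vv a t := this
    calc -(lam a * (if i = jj a then (1:ℝ) else 0))
        = lam a * (-(if i = jj a then (1:ℝ) else 0)) := by ring
      _ ≤ lam a * ∑ t, m t * vv a t := mul_le_mul_of_nonneg_left h2 (hlam a)
  obtain ⟨hge, heq, hstrict⟩ := hmin i n₀ hn₀
  rw [hLHS]
  by_cases hm0 : m = 0
  · subst hm0
    simp only [hc0 i, Pi.zero_apply, zero_mul, Finset.sum_const_zero, mul_zero, add_zero,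
      zero_add]
    linarith [heq]
  · have := hstrict m hm hm0 hmne
    linarith
end
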